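/- Let k, q be positive integers with k ≤ q, let G be a bipartite multigraph, and let f be a nonnegative integer-valued function on V(G). If G has a spanning subgraph H with d_H(v) = q·f(v) for every vertex v, then G has a spanning subgraph F with d_F(v) = k·f(v) for every vertex v. -/

import Mathlib

namespace MG

variable {V E : Type} [Fintype V] [Fintype E] [DecidableEq V] [DecidableEq E]

/-- Degree of `v` in the spanning subgraph with edge set `S`; loops count twice. -/
def deg (ends : E → V × V) (S : Finset E) (v : V) : ℕ :=
  (S.filter fun e => (ends e).1 = v).card + (S.filter fun e => (ends e).2 = v).card

/-- Edges of `S` with exactly one end in `A`. -/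
def cut (ends : E → V × V) (S : Finset E) (A : Finset V) : Finset E :=
  S.filter fun e => ¬ (((ends e).1 ∈ A) ↔ ((ends e).2 ∈ A))

/-- Edges of `S` with both ends in `A`. -/
def inside (ends : E → V × V) (S : Finset E) (A : Finset V) : Finset E :=
  S.filter fun e => (ends e).1 ∈ A ∧ (ends e).2 ∈ A

/-- `m`-edge-connected: every edge cut has at least `m` edges. -/
def EdgeConn (ends : E → V × V) (m : ℕ) : Prop :=
  ∀ A : Finset V, A.Nonempty → A ≠ Finset.univ → m ≤ (cut ends Finset.univ A).card

/-- Essentially `lam`-edge-connected: every edge cut of size `< lam` has all its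
edges incident with one common vertex. -/
def EssEdgeConn (ends : E → V × V) (lam : ℕ) : Prop :=
  ∀ A : Finset V, A.Nonempty → A ≠ Finset.univ →
    (cut ends Finset.univ A).card < lam →
      ∃ v : V, ∀ e ∈ cut ends Finset.univ A, (ends e).1 = v ∨ (ends e).2 = v

/-- The edge set `S` induces a bipartite graph. -/
def BipOn (ends : E → V × V) (S : Finset E) : Prop :=
  ∃ X : Finset V, ∀ e ∈ S, ¬ (((ends e).1 ∈ X) ↔ ((ends e).2 ∈ X))

/-- Edges of `S` not crossing the bipartition `(X, Xᶜ)`. -/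
def bad (ends : E → V × V) (S : Finset E) (X : Finset V) : Finset E :=
  S.filter fun e => (((ends e).1 ∈ X) ↔ ((ends e).2 ∈ X))

/-- The bipartite index: fewest edge deletions making the graph `(V, S)` bipartite. -/
def biIndexOn (ends : E → V × V) (S : Finset E) : ℕ :=
  Finset.univ.inf' Finset.univ_nonempty fun X : Finset V => (bad ends S X).card

/-- Adjacency via an edge of `S`. -/
def adjOn (ends : E → V × V) (S : Finset E) (a b : V) : Prop :=
  ∃ e ∈ S, ends e = (a, b) ∨ ends e = (b, a)

/-- The spanning subgraph with edge set `S` is connected. -/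
def ConnOn (ends : E → V × V) (S : Finset E) : Prop :=
  ∀ a b : V, Relation.ReflTransGen (adjOn ends S) a b

/-- `T` is the edge set of a spanning tree. -/
def IsSpTree (ends : E → V × V) (T : Finset E) : Prop :=
  ConnOn ends T ∧ T.card + 1 = Fintype.card V

/-- `m`-tree-connected inside `S`: `m` pairwise edge-disjoint spanning trees using edges of `S`. -/
def TreeConnOn (ends : E → V × V) (m : ℕ) (S : Finset E) : Prop :=
  ∃ T : Fin m → Finset E, (∀ i, T i ⊆ S ∧ IsSpTree ends (T i)) ∧
    ∀ i j, i ≠ j → Disjoint (T i) (T j)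

/-- `C` is the edge set of an odd cycle: odd, nonempty, 2-regular on its support and
connected on its support. -/
def IsOddCycle (ends : E → V × V) (C : Finset E) : Prop :=
  C.Nonempty ∧ Odd C.card ∧ (∀ v : V, deg ends C v = 0 ∨ deg ends C v = 2) ∧
    ∀ a b : V, 0 < deg ends C a → 0 < deg ends C b →
      Relation.ReflTransGen (adjOn ends C) a b

/-- `f` is compatible with the graph with respect to the bipartition `(X, Xᶜ)`. -/
def CompatAt (ends : E → V × V) {k : ℕ} (f : V → ZMod k) (X : Finset V) : Prop :=
  (∃ x : ℕ, x ≤ (inside ends Finset.univ X).card ∧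
    (∑ v ∈ X, f v) - ((2 * x : ℕ) : ZMod k) = ∑ v ∈ Xᶜ, f v) ∨
  (∃ y : ℕ, y ≤ (inside ends Finset.univ Xᶜ).card ∧
    (∑ v ∈ X, f v) = (∑ v ∈ Xᶜ, f v) - ((2 * y : ℕ) : ZMod k))

end MG

open MG Finset

/-!
Orient every edge of the bipartite multigraph from `X` to its complement. Splitting each vertex `v`
into `f v` vertices of degree `q` turns `H` into a `q`-regular bipartite multigraph, which has a
perfect matching by Hall's theorem (König). Merging the copies back, the matching becomes a spanning
subgraph `M ⊆ H` with degrees `f`, and `H \ M` has degrees `(q - 1) * f`; removing `q - k` such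
factors leaves degrees `k * f`.
-/

namespace Bipartite

variable {E α β : Type*} [DecidableEq α] [DecidableEq β]

lemma exists_equipartition (q m : ℕ) (s : Finset E) (hs : #s = q * m) :
    ∃ r : E → ℕ, (∀ e ∈ s, r e < m) ∧ ∀ j < m, #{e ∈ s | r e = j} = q := by
  classical
  induction m generalizing s with
  | zero => exact ⟨fun _ => 0, by simp_all⟩
  | succ m ih =>
    obtain ⟨t, hts, ht⟩ := exists_subset_card_eq
      (show q ≤ #s by rw [hs]; exact Nat.le_mul_of_pos_right q m.succ_pos)
    obtain ⟨r, hr, hfib⟩ := ih (s \ t)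
      (by rw [card_sdiff_of_subset hts, hs, ht, mul_add_one, Nat.add_sub_cancel])
    refine ⟨fun e => if e ∈ t then m else r e, fun e he => ?_, fun j hj => ?_⟩
    · by_cases het : e ∈ t
      · simp [het]
      · simp [het, (hr e (mem_sdiff.2 ⟨he, het⟩)).le]
    · rcases Nat.lt_succ_iff_lt_or_eq.1 hj with hj | rfl
      · rw [← hfib j hj]
        congr 1
        ext e
        by_cases het : e ∈ t <;> simp [het]
        omega
      · rw [← ht]
        congr 1
        ext e
        by_cases het : e ∈ t
        · simp [het, hts het]
        · simp only [het, mem_filter, if_false, iff_false, not_and]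
          exact fun he => (hr e (mem_sdiff.2 ⟨he, het⟩)).ne

/-- Vertex `x` of degree `q * m x` is split into `m x` vertices of degree `q`; the new ends of the
edges are the pairs `(a e, r e)`. -/
lemma exists_vertex_splitting {q : ℕ} (H : Finset E) (a : E → α) (m : α → ℕ)
    (ha : ∀ x, #{e ∈ H | a e = x} = q * m x) :
    ∃ r : E → ℕ, (∀ e ∈ H, r e < m (a e)) ∧
      ∀ x, ∀ j < m x, #{e ∈ H | (a e, r e) = (x, j)} = q := by
  choose r hr hfib using fun x => exists_equipartition q (m x) _ (ha x)
  refine ⟨fun e => r (a e) e, fun e he => hr _ e (mem_filter.2 ⟨he, rfl⟩), fun x j hj => ?_⟩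
  rw [← hfib x j hj, filter_filter]
  congr 1
  refine filter_congr fun e _ => ?_
  simp only [Prod.mk.injEq]
  constructor <;> rintro ⟨rfl, rfl⟩ <;> exact ⟨rfl, rfl⟩

lemma card_eq_mul_card_image_of_card_fiber_eq {q : ℕ} (H : Finset E) (a : E → α)
    (ha : ∀ x ∈ H.image a, #{e ∈ H | a e = x} = q) : #H = q * #(H.image a) := by
  rw [card_eq_sum_card_image a H, sum_congr rfl ha, sum_const, smul_eq_mul, mul_comm]

section Regular

variable {q : ℕ} (hq : 0 < q) (H : Finset E) (a : E → α) (b : E → β)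
  (ha : ∀ x ∈ H.image a, #{e ∈ H | a e = x} = q) (hb : ∀ y ∈ H.image b, #{e ∈ H | b e = y} = q)
include hq ha hb

lemma exists_injective_selection_of_regular :
    ∃ σ : H.image a → E, (∀ x, σ x ∈ H ∧ a (σ x) = x) ∧ Function.Injective (b ∘ σ) := by
  let t : H.image a → Finset β := fun x => {e ∈ H | a e = x}.image b
  -- Hall's condition: the `q * #S` edges at `S` reach right vertices carrying at most `q` each.
  have hall : ∀ S : Finset (H.image a), #S ≤ #(S.biUnion t) := by
    intro S
    let T := S.map (Function.Embedding.subtype _)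
    let U := {e ∈ H | a e ∈ T}
    have hU_lower : q * #T ≤ #U :=
      mul_card_image_le_card_of_maps_to (fun e he => (mem_filter.1 he).2) q fun x hx => by
        obtain ⟨x, -, rfl⟩ := mem_map.1 hx
        rw [filter_filter, ← ha x x.2]
        exact (congrArg card (filter_congr fun e _ => ⟨fun h => ⟨h ▸ hx, h⟩, And.right⟩)).le
    have hU_upper : #U ≤ q * #(S.biUnion t) := by
      refine card_le_mul_card_image_of_maps_to (f := b) (fun e he => ?_) q fun y hy => ?_
      · obtain ⟨heH, haT⟩ := mem_filter.1 he
        obtain ⟨x, hxS, hx⟩ := mem_map.1 haT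
        exact mem_biUnion.2 ⟨x, hxS, mem_image_of_mem b (mem_filter.2 ⟨heH, hx.symm⟩)⟩
      · obtain ⟨x, -, hyx⟩ := mem_biUnion.1 hy
        have hyH : y ∈ H.image b := image_subset_image (filter_subset _ _) hyx
        exact (card_le_card (filter_subset_filter _ (filter_subset _ _))).trans (hb y hyH).le
    rw [card_map] at hU_lower
    exact Nat.le_of_mul_le_mul_left (hU_lower.trans hU_upper) hq
  obtain ⟨φ, hφ, hφt⟩ := (all_card_le_biUnion_card_iff_exists_injective t).1 hall
  have : ∀ x : H.image a, ∃ e, (e ∈ H ∧ a e = x) ∧ b e = φ x := fun x => by simpa [t] using hφt x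
  choose σ hσ hσφ using this
  exact ⟨σ, hσ, fun x y h => hφ (by simpa [hσφ] using h)⟩

theorem exists_perfect_matching_of_regular :
    ∃ M ⊆ H, (∀ x ∈ H.image a, #{e ∈ M | a e = x} = 1) ∧
      ∀ y ∈ H.image b, #{e ∈ M | b e = y} = 1 := by
  obtain ⟨σ, hσ, hinj⟩ := exists_injective_selection_of_regular hq H a b ha hb
  set M := univ.map ⟨σ, hinj.of_comp⟩
  have hMH : M ⊆ H := by
    intro e he
    obtain ⟨x, -, rfl⟩ := mem_map.1 he
    exact (hσ x).1
  have hcard_left : #M = #(H.image a) := by rw [card_map, card_univ, Fintype.card_coe]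
  have hcard_right : #(H.image a) = #(H.image b) := Nat.eq_of_mul_eq_mul_left hq <| by
    rw [← card_eq_mul_card_image_of_card_fiber_eq H a ha,
      ← card_eq_mul_card_image_of_card_fiber_eq H b hb]
  have hright_le : ∀ y ∈ H.image b, #{e ∈ M | b e = y} ≤ 1 := by
    refine fun y _ => card_le_one.2 fun e he e' he' => ?_
    obtain ⟨⟨x, -, rfl⟩, hx⟩ := And.imp_left mem_map.1 (mem_filter.1 he)
    obtain ⟨⟨x', -, rfl⟩, hx'⟩ := And.imp_left mem_map.1 (mem_filter.1 he')
    exact congrArg σ (hinj (hx.trans hx'.symm))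
  refine ⟨M, hMH, fun x hx => card_eq_one.2 ⟨σ ⟨x, hx⟩, ?_⟩, ?_⟩
  · ext e
    simp only [M, mem_filter, mem_map, mem_univ, true_and, mem_singleton]
    constructor
    · rintro ⟨⟨x', rfl⟩, hx'⟩
      exact congrArg σ (Subtype.ext ((hσ x').2.symm.trans hx'))
    · rintro rfl
      exact ⟨⟨_, rfl⟩, (hσ _).2⟩
  · refine (sum_eq_sum_iff_of_le hright_le).1 ?_
    rw [← card_eq_sum_card_fiberwise fun e he => mem_image_of_mem b (hMH he), hcard_left,
      hcard_right, sum_const, smul_eq_mul, mul_one]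

end Regular

lemma card_filter_eq_of_splitting {q : ℕ} (hq : 0 < q) {H M : Finset E} (hMH : M ⊆ H)
    {a : E → α} {r : E → ℕ} {m : α → ℕ} (hr : ∀ e ∈ H, r e < m (a e))
    (hsplit : ∀ x, ∀ j < m x, #{e ∈ H | (a e, r e) = (x, j)} = q)
    (hM : ∀ p ∈ H.image fun e => (a e, r e), #{e ∈ M | (a e, r e) = p} = 1) (x : α) :
    #{e ∈ M | a e = x} = m x := by
  have hmaps : ∀ e ∈ {e ∈ M | a e = x}, r e ∈ range (m x) := by
    intro e he
    obtain ⟨heM, rfl⟩ := mem_filter.1 he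
    exact mem_range.2 (hr e (hMH heM))
  have hfiber : ∀ j ∈ range (m x), #{e ∈ {e ∈ M | a e = x} | r e = j} = 1 := by
    intro j hj
    obtain ⟨e, he⟩ := card_pos.1 ((hsplit x j (mem_range.1 hj)).symm ▸ hq)
    obtain ⟨heH, hej⟩ := mem_filter.1 he
    rw [filter_filter, ← hM _ (mem_image_of_mem _ heH), hej]
    simp only [Prod.mk.injEq]
  rw [card_eq_sum_card_fiberwise hmaps, sum_congr rfl hfiber, sum_const, card_range, smul_eq_mul,
    mul_one]

theorem exists_factor_of_regular {q : ℕ} (hq : 0 < q) (H : Finset E) (a : E → α) (b : E → β)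
    (m : α → ℕ) (n : β → ℕ) (ha : ∀ x, #{e ∈ H | a e = x} = q * m x)
    (hb : ∀ y, #{e ∈ H | b e = y} = q * n y) :
    ∃ M ⊆ H, (∀ x, #{e ∈ M | a e = x} = m x) ∧ ∀ y, #{e ∈ M | b e = y} = n y := by
  obtain ⟨r, hr, hsplit_a⟩ := exists_vertex_splitting H a m ha
  obtain ⟨s, hs, hsplit_b⟩ := exists_vertex_splitting H b n hb
  have hreg_a : ∀ p ∈ H.image fun e => (a e, r e), #{e ∈ H | (a e, r e) = p} = q := by
    intro p hp
    obtain ⟨e, he, rfl⟩ := mem_image.1 hp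
    exact hsplit_a _ _ (hr e he)
  have hreg_b : ∀ p ∈ H.image fun e => (b e, s e), #{e ∈ H | (b e, s e) = p} = q := by
    intro p hp
    obtain ⟨e, he, rfl⟩ := mem_image.1 hp
    exact hsplit_b _ _ (hs e he)
  obtain ⟨M, hMH, hMa, hMb⟩ := exists_perfect_matching_of_regular hq H _ _ hreg_a hreg_b
  exact ⟨M, hMH, card_filter_eq_of_splitting hq hMH hr hsplit_a hMa,
    card_filter_eq_of_splitting hq hMH hs hsplit_b hMb⟩

theorem exists_factor_of_le {k q : ℕ} (hkq : k ≤ q) (H : Finset E) (a : E → α) (b : E → β)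
    (m : α → ℕ) (n : β → ℕ) (ha : ∀ x, #{e ∈ H | a e = x} = q * m x)
    (hb : ∀ y, #{e ∈ H | b e = y} = q * n y) :
    ∃ F ⊆ H, (∀ x, #{e ∈ F | a e = x} = k * m x) ∧ ∀ y, #{e ∈ F | b e = y} = k * n y := by
  classical
  obtain ⟨d, rfl⟩ := Nat.exists_eq_add_of_le hkq
  induction d generalizing H with
  | zero => exact ⟨H, subset_rfl, ha, hb⟩
  | succ d ih =>
    obtain ⟨M, hMH, hMa, hMb⟩ := exists_factor_of_regular (k + d).succ_pos H a b m n ha hb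
    have hcard_sdiff : ∀ p : E → Prop, [DecidablePred p] →
        #{e ∈ H \ M | p e} = #{e ∈ H | p e} - #{e ∈ M | p e} := by
      intro p _
      rw [← card_sdiff_of_subset (filter_subset_filter p hMH)]
      congr 1
      ext e
      simp only [mem_filter, mem_sdiff]
      tauto
    obtain ⟨F, hF, hFa, hFb⟩ := ih (H \ M) (k.le_add_right d)
      (fun x => by rw [hcard_sdiff, ha, hMa, ← add_assoc, Nat.succ_mul, Nat.add_sub_cancel])
      (fun y => by rw [hcard_sdiff, hb, hMb, ← add_assoc, Nat.succ_mul, Nat.add_sub_cancel])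
    exact ⟨F, hF.trans sdiff_subset, hFa, hFb⟩

end Bipartite

namespace MG

variable {V E : Type} [DecidableEq V] {ends : E → V × V} {X : Finset V}

variable (ends X) in
def endIn (e : E) : V := if (ends e).1 ∈ X then (ends e).1 else (ends e).2

variable (ends X) in
def endOut (e : E) : V := if (ends e).1 ∈ X then (ends e).2 else (ends e).1

lemma deg_eq_card_filter_endIn_add_card_filter_endOut (S : Finset E) (v : V) :
    deg ends S v = #{e ∈ S | endIn ends X e = v} + #{e ∈ S | endOut ends X e = v} := by
  simp only [deg, card_filter, ← sum_add_distrib]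
  refine sum_congr rfl fun e _ => ?_
  unfold endIn endOut
  split_ifs <;> simp_all

variable (hbip : ∀ e : E, ¬ (((ends e).1 ∈ X) ↔ ((ends e).2 ∈ X)))
include hbip

lemma endIn_mem (e : E) : endIn ends X e ∈ X := by
  unfold endIn; have := hbip e; split_ifs <;> tauto

lemma endOut_notMem (e : E) : endOut ends X e ∉ X := by
  unfold endOut; have := hbip e; split_ifs <;> tauto

lemma card_filter_endIn_eq_zero {v : V} (hv : v ∉ X) (S : Finset E) :
    #{e ∈ S | endIn ends X e = v} = 0 :=
  card_eq_zero.2 (filter_eq_empty_iff.2 fun e _ he => hv (he ▸ endIn_mem hbip e))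

lemma card_filter_endOut_eq_zero {v : V} (hv : v ∈ X) (S : Finset E) :
    #{e ∈ S | endOut ends X e = v} = 0 :=
  card_eq_zero.2 (filter_eq_empty_iff.2 fun e _ he => endOut_notMem hbip e (he ▸ hv))

lemma card_filter_endIn_eq (S : Finset E) (v : V) :
    #{e ∈ S | endIn ends X e = v} = if v ∈ X then deg ends S v else 0 := by
  rw [deg_eq_card_filter_endIn_add_card_filter_endOut (X := X)]
  split_ifs with hv
  · rw [card_filter_endOut_eq_zero hbip hv, add_zero]
  · exact card_filter_endIn_eq_zero hbip hv S

lemma card_filter_endOut_eq (S : Finset E) (v : V) :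
    #{e ∈ S | endOut ends X e = v} = if v ∈ X then 0 else deg ends S v := by
  rw [deg_eq_card_filter_endIn_add_card_filter_endOut (X := X)]
  split_ifs with hv
  · exact card_filter_endOut_eq_zero hbip hv S
  · rw [card_filter_endIn_eq_zero hbip hv, zero_add]

end MG

theorem stmt14_general {V E : Type} [DecidableEq V]
    (ends : E → V × V) (X : Finset V) (k q : ℕ) (hkq : k ≤ q)
    (hbip : ∀ e : E, ¬ (((ends e).1 ∈ X) ↔ ((ends e).2 ∈ X)))
    (f : V → ℕ) (H : Finset E)
    (hH : ∀ v : V, deg ends H v = q * f v) :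
    ∃ F : Finset E, ∀ v : V, deg ends F v = k * f v := by
  obtain ⟨F, -, hF_in, hF_out⟩ := Bipartite.exists_factor_of_le hkq H (endIn ends X) (endOut ends X)
    (fun v => if v ∈ X then f v else 0) (fun v => if v ∈ X then 0 else f v)
    (fun v => by rw [card_filter_endIn_eq hbip, hH, mul_ite, mul_zero])
    (fun v => by rw [card_filter_endOut_eq hbip, hH, mul_ite, mul_zero])
  refine ⟨F, fun v => ?_⟩
  rw [deg_eq_card_filter_endIn_add_card_filter_endOut (X := X), hF_in, hF_out]
  split_ifs <;> simp

theorem stmt14 {V E : Type} [Fintype V] [Fintype E] [DecidableEq V] [DecidableEq E]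
    (ends : E → V × V) (X : Finset V) (k q : ℕ) (hk : 0 < k) (hkq : k ≤ q)
    (hbip : ∀ e : E, ¬ (((ends e).1 ∈ X) ↔ ((ends e).2 ∈ X)))
    (f : V → ℕ) (H : Finset E)
    (hH : ∀ v : V, deg ends H v = q * f v) :
    ∃ F : Finset E, ∀ v : V, deg ends F v = k * f v :=
  stmt14_general ends X k q hkq hbip f H hH
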